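/- The CBC mode of operation built on the Caesar shift cipher over 3-bit blocks with shift k = 1 or k = 2 is chaotic according to Devaney on (X, d): the map G_g, with g(m, x) = E_k(x ⊕ m) and E_k(y) = y + k mod 8 (identifying 3-bit blocks with integers in {0,…,7} via binary representation), is regular (its periodic points are dense in X), topologically transitive, and has sensitive dependence on initial conditions. -/

import Mathlib

open scoped BigOperators

/-- N-bit blocks: Boolean vectors of length N. -/
abbrev Block (N : ℕ) := Fin N → Bool

/-- Infinite sequences of N-bit blocks. -/
abbrev Msg (N : ℕ) := ℕ → Block N

/-- The phase space X = B^N × S_N. -/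
abbrev Phase (N : ℕ) := Block N × Msg N

/-- Hamming distance d_e on B^N. -/
noncomputable def dE {N : ℕ} (x y : Block N) : ℝ :=
  ∑ j : Fin N, if x j = y j then (0 : ℝ) else 1

/-- Distance d_m on message sequences. -/
noncomputable def dM {N : ℕ} (m m' : Msg N) : ℝ :=
  (9 / (N : ℝ)) * ∑' k : ℕ, (∑ i : Fin N, if m k i = m' k i then (0 : ℝ) else 1) / 10 ^ (k + 1)

/-- The distance d on the phase space X. -/
noncomputable def dX {N : ℕ} (P Q : Phase N) : ℝ :=
  dE P.1 Q.1 + dM P.2 Q.2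

/-- The shift on message sequences. -/
def shiftMsg {N : ℕ} (m : Msg N) : Msg N := fun k => m (k + 1)

/-- The dynamical system G_g(x, m) = (g(m^0, x), σ(m)). -/
def Gg {N : ℕ} (g : Block N → Block N → Block N) (P : Phase N) : Phase N :=
  (g (P.2 0) P.1, shiftMsg P.2)

/-- Open sets for the topology induced by the distance d on X. -/
def IsOpenX {N : ℕ} (U : Set (Phase N)) : Prop :=
  ∀ P ∈ U, ∃ ε : ℝ, 0 < ε ∧ ∀ Q : Phase N, dX P Q < ε → Q ∈ U

/-- A 3-bit block read in the binary numeral system, counting from the left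
(bit 1 is the most significant). -/
def blockToNat (x : Block 3) : ℕ :=
  (if x 0 then 4 else 0) + (if x 1 then 2 else 0) + (if x 2 then 1 else 0)

/-- The 3-bit block representing y mod 8 in binary, counting from the left. -/
def natToBlock (y : ℕ) : Block 3 :=
  fun j => Nat.testBit (y % 8) (2 - j.val)

/-- The Caesar shift cipher E_k(y) = y + k mod 8, acting on 3-bit blocks via the binary
identification with {0, …, 7}. -/
def caesar (k : ℕ) (x : Block 3) : Block 3 :=
  natToBlock (blockToNat x + k)

/-- The CBC iterate function for the Caesar cipher: g(m, x) = E_k(x ⊕ m). -/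
def caesarCBC (k : ℕ) (m x : Block 3) : Block 3 :=
  caesar k (fun j => Bool.xor (x j) (m j))

/-!
Everything rests on one property of `g(a, x) = E_k(x ⊕ a)`: for every state `x`, the map
`a ↦ g(a, x)` is a bijection of blocks. Changing a message from block `n` on moves a point by at
most `10⁻ⁿ`, while by surjectivity block `n` can be chosen to steer the state at time `n + 1`
anywhere, followed by an arbitrary message tail. Steering back to the initial state and repeating
the message periodically gives nearby periodic points; steering to a point of `V`, with its
message as tail, gives transitivity. By injectivity, changing block `n` alone changes the state
at time `n + 1`, which puts the two orbits at distance at least `1`.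
-/

section Metric

variable {N : ℕ}

theorem dE_eq_hammingDist (x y : Block N) : dE x y = hammingDist x y := by
  rw [dE, hammingDist, Finset.natCast_card_filter]
  simp only [ite_not]

theorem dE_self (x : Block N) : dE x x = 0 := by simp [dE]

theorem dM_self (m : Msg N) : dM m m = 0 := by simp [dM]

theorem one_le_dE {x y : Block N} (h : x ≠ y) : 1 ≤ dE x y := by
  rw [dE_eq_hammingDist]
  exact_mod_cast hammingDist_pos.mpr h

theorem dM_eq_tsum_dE (m m' : Msg N) :
    dM m m' = 9 / N * ∑' k, dE (m k) (m' k) / 10 ^ (k + 1) := rfl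

theorem dE_div_pow_le (x y : Block N) (k : ℕ) :
    dE x y / 10 ^ (k + 1) ≤ N * 10⁻¹ ^ (k + 1) := by
  rw [div_eq_mul_inv, ← inv_pow, dE_eq_hammingDist]
  gcongr
  simpa using hammingDist_le_card_fintype (x := x) (y := y)

theorem dM_le_of_eq_of_lt {m m' : Msg N} {n : ℕ} (h : ∀ j < n, m j = m' j) :
    dM m m' ≤ 10⁻¹ ^ n := by
  rcases Nat.eq_zero_or_pos N with rfl | hN
  · simp [dM]
  set f : ℕ → ℝ := fun k => dE (m k) (m' k) / 10 ^ (k + 1)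
  have hf_nonneg : ∀ k, 0 ≤ f k := fun k => by
    simp only [f, dE_eq_hammingDist]; positivity
  have hgeom (c : ℝ) : Summable fun k : ℕ => c * 10⁻¹ ^ k :=
    (summable_geometric_of_lt_one (by norm_num) (by norm_num)).mul_left c
  have hf : Summable f := (hgeom (N * 10⁻¹)).of_nonneg_of_le hf_nonneg
    fun k => (dE_div_pow_le _ _ k).trans_eq (by ring)
  have hhead : ∑ k ∈ Finset.range n, f k = 0 :=
    Finset.sum_eq_zero fun k hk => by simp [f, h k (Finset.mem_range.mp hk), dE]
  have htail : ∑' k, f (k + n) ≤ ∑' k, (N * 10⁻¹ ^ (n + 1) : ℝ) * 10⁻¹ ^ k :=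
    ((summable_nat_add_iff n).mpr hf).tsum_le_tsum
      (fun k => (dE_div_pow_le _ _ (k + n)).trans_eq (by ring)) (hgeom _)
  rw [tsum_mul_left, tsum_geometric_of_lt_one (by norm_num) (by norm_num)] at htail
  rw [dM_eq_tsum_dE, ← hf.sum_add_tsum_nat_add n, hhead, zero_add]
  calc 9 / (N : ℝ) * ∑' k, f (k + n)
      ≤ 9 / N * (N * 10⁻¹ ^ (n + 1) * (1 - 10⁻¹)⁻¹) := by gcongr
    _ = 10⁻¹ ^ n := by field_simp; ring

end Metric

section Splice

variable {N : ℕ}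

def spliceMsg (m : Msg N) (n : ℕ) (a : Block N) (t : Msg N) : Msg N :=
  fun i => if i < n then m i else if i = n then a else t (i - (n + 1))

def repeatMsg (w : Msg N) (p : ℕ) : Msg N := fun i => w (i % p)

variable (m : Msg N) (n : ℕ) (a : Block N) (t : Msg N)

theorem spliceMsg_of_lt {i : ℕ} (h : i < n) : spliceMsg m n a t i = m i := if_pos h

theorem spliceMsg_self : spliceMsg m n a t n = a := by simp [spliceMsg]

theorem spliceMsg_add (j : ℕ) : spliceMsg m n a t (j + (n + 1)) = t j := by
  simp [spliceMsg, show ¬ j + (n + 1) < n by omega, show j + (n + 1) ≠ n by omega]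

theorem spliceMsg_eq_self : spliceMsg m n (m n) (fun j => m (j + (n + 1))) = m := by
  funext i
  rcases lt_trichotomy i n with h | rfl | h
  · exact spliceMsg_of_lt _ _ _ _ h
  · exact spliceMsg_self _ _ _ _
  · obtain ⟨j, rfl⟩ : ∃ j, i = j + (n + 1) := ⟨i - (n + 1), by omega⟩
    exact spliceMsg_add m n (m n) _ j

theorem spliceMsg_repeatMsg :
    spliceMsg m n a (repeatMsg (spliceMsg m n a t) (n + 1)) =
      repeatMsg (spliceMsg m n a t) (n + 1) := by
  funext i
  rcases lt_trichotomy i n with h | rfl | h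
  · simp [spliceMsg_of_lt _ _ _ _ h, repeatMsg, Nat.mod_eq_of_lt (by omega : i < n + 1)]
  · simp [spliceMsg_self, repeatMsg]
  · obtain ⟨j, rfl⟩ : ∃ j, i = j + (n + 1) := ⟨i - (n + 1), by omega⟩
    simp [spliceMsg_add, repeatMsg]

theorem dX_spliceMsg_le (x : Block N) : dX (x, m) (x, spliceMsg m n a t) ≤ 10⁻¹ ^ n := by
  simpa [dX, dE_self] using dM_le_of_eq_of_lt fun j hj => (spliceMsg_of_lt m n a t hj).symm

variable {m}

theorem exists_dX_spliceMsg_lt (x : Block N) {ε : ℝ} (hε : 0 < ε) :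
    ∃ n, ∀ a t, dX (x, m) (x, spliceMsg m n a t) < ε := by
  obtain ⟨n, hn⟩ := exists_pow_lt_of_lt_one hε (by norm_num : (10⁻¹ : ℝ) < 1)
  exact ⟨n, fun a t => (dX_spliceMsg_le m n a t x).trans_lt hn⟩

theorem IsOpenX.exists_spliceMsg_mem {U : Set (Phase N)} (hU : IsOpenX U) {x : Block N}
    (hP : (x, m) ∈ U) : ∃ n, ∀ a t, (x, spliceMsg m n a t) ∈ U := by
  obtain ⟨ε, hε, hball⟩ := hU _ hP
  obtain ⟨n, hn⟩ := exists_dX_spliceMsg_lt x hε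
  exact ⟨n, fun a t => hball _ (hn a t)⟩

end Splice

section Orbit

variable {N : ℕ} (g : Block N → Block N → Block N)

theorem iterate_Gg_snd (P : Phase N) (n : ℕ) : ((Gg g)^[n] P).2 = fun j => P.2 (j + n) := by
  induction n with
  | zero => rfl
  | succ n ih =>
    simp only [Function.iterate_succ_apply', Gg, ih]
    funext j
    exact congrArg P.2 (by omega)

theorem iterate_Gg_fst_congr {m m' : Msg N} {n : ℕ} (x : Block N) (h : ∀ j < n, m j = m' j) :
    ((Gg g)^[n] (x, m)).1 = ((Gg g)^[n] (x, m')).1 := by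
  induction n with
  | zero => rfl
  | succ n ih =>
    simp only [Function.iterate_succ_apply', Gg, iterate_Gg_snd, zero_add]
    rw [ih fun j hj => h j (by omega), h n n.lt_succ_self]

theorem iterate_Gg_spliceMsg (m : Msg N) (n : ℕ) (a : Block N) (t : Msg N) (x : Block N) :
    (Gg g)^[n + 1] (x, spliceMsg m n a t) = (g a ((Gg g)^[n] (x, m)).1, t) := by
  rw [Function.iterate_succ_apply', Gg, iterate_Gg_snd, iterate_Gg_fst_congr g x
    fun j hj => spliceMsg_of_lt m n a t hj]
  congr
  · simpa using spliceMsg_self m n a t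
  · funext j
    simpa [shiftMsg, add_assoc, add_comm 1] using spliceMsg_add m n a t j

end Orbit

section Devaney

variable {N : ℕ} {g : Block N → Block N → Block N}

theorem Gg_regular (hg : ∀ x, Function.Surjective fun a => g a x) (P : Phase N) {ε : ℝ}
    (hε : 0 < ε) : ∃ (Q : Phase N) (n : ℕ), 1 ≤ n ∧ (Gg g)^[n] Q = Q ∧ dX P Q < ε := by
  obtain ⟨x, m⟩ := P
  obtain ⟨n, hn⟩ := exists_dX_spliceMsg_lt x hε
  obtain ⟨a, ha⟩ : ∃ a, g a ((Gg g)^[n] (x, m)).1 = x := hg _ x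
  set p := repeatMsg (spliceMsg m n a m) (n + 1)
  have hp : spliceMsg m n a p = p := spliceMsg_repeatMsg m n a m
  refine ⟨(x, p), n + 1, n.succ_pos, ?_, hp ▸ hn a p⟩
  calc (Gg g)^[n + 1] (x, p) = (Gg g)^[n + 1] (x, spliceMsg m n a p) := by rw [hp]
    _ = (x, p) := by rw [iterate_Gg_spliceMsg, ha]

theorem Gg_transitive (hg : ∀ x, Function.Surjective fun a => g a x) {U V : Set (Phase N)}
    (hU : IsOpenX U) (hUne : U.Nonempty) (hVne : V.Nonempty) :
    ∃ n : ℕ, 0 < n ∧ ((Gg g)^[n] '' U ∩ V).Nonempty := by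
  obtain ⟨⟨x, m⟩, hP⟩ := hUne
  obtain ⟨⟨y, t⟩, hQ⟩ := hVne
  obtain ⟨n, hn⟩ := hU.exists_spliceMsg_mem hP
  obtain ⟨a, ha⟩ : ∃ a, g a ((Gg g)^[n] (x, m)).1 = y := hg _ y
  exact ⟨n + 1, n.succ_pos, (y, t), ⟨_, hn a t, by rw [iterate_Gg_spliceMsg, ha]⟩, hQ⟩

theorem Gg_sensitive [NeZero N] (hg : ∀ x, Function.Injective fun a => g a x) :
    ∃ δ : ℝ, 0 < δ ∧ ∀ P : Phase N, ∀ V : Set (Phase N), IsOpenX V → P ∈ V →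
      ∃ Q ∈ V, ∃ n : ℕ, 0 < n ∧ dX ((Gg g)^[n] P) ((Gg g)^[n] Q) > δ := by
  refine ⟨1 / 2, by norm_num, ?_⟩
  rintro ⟨x, m⟩ V hV hP
  obtain ⟨n, hn⟩ := hV.exists_spliceMsg_mem hP
  obtain ⟨a, ha⟩ := exists_ne (m n)
  refine ⟨_, hn a fun j => m (j + (n + 1)), n + 1, n.succ_pos, ?_⟩
  have hstate : g (m n) ((Gg g)^[n] (x, m)).1 ≠ g a ((Gg g)^[n] (x, m)).1 :=
    fun h => ha ((hg _) h).symm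
  have hdist := one_le_dE hstate
  have hP' := iterate_Gg_spliceMsg g m n (m n) (fun j => m (j + (n + 1))) x
  rw [spliceMsg_eq_self] at hP'
  rw [hP', iterate_Gg_spliceMsg]
  simp only [dX, dM_self, add_zero]
  linarith

end Devaney

section Caesar

theorem blockToNat_injective : Function.Injective blockToNat := by decide

theorem blockToNat_lt (x : Block 3) : blockToNat x < 8 := by
  revert x; decide

theorem blockToNat_natToBlock (y : ℕ) : blockToNat (natToBlock y) = y % 8 := by
  have hsmall : ∀ r < 8, blockToNat (natToBlock r) = r := by decide
  rw [← hsmall (y % 8) (Nat.mod_lt _ (by norm_num))]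
  unfold natToBlock
  rw [Nat.mod_mod]

theorem caesar_bijective (k : ℕ) : Function.Bijective (caesar k) := by
  refine Finite.injective_iff_bijective.mp fun x y h => blockToNat_injective ?_
  have hmod := congrArg blockToNat h
  simp only [caesar, blockToNat_natToBlock] at hmod
  have := blockToNat_lt x
  have := blockToNat_lt y
  omega

theorem caesarCBC_bijective_left (k : ℕ) (x : Block 3) :
    Function.Bijective fun m => caesarCBC k m x :=
  (caesar_bijective k).comp
    (Function.Involutive.bijective fun m => funext fun j => Bool.bne_self_left (x j) (m j))

end Caesar

theorem caesar_cbc_chaotic_general (k : ℕ) :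
    (∀ (P : Phase 3) (ε : ℝ), 0 < ε →
        ∃ (Q : Phase 3) (n : ℕ), 1 ≤ n ∧ (Gg (caesarCBC k))^[n] Q = Q ∧ dX P Q < ε) ∧
    (∀ U V : Set (Phase 3), IsOpenX U → IsOpenX V → U.Nonempty → V.Nonempty →
        ∃ n : ℕ, 0 < n ∧ ((Gg (caesarCBC k))^[n] '' U ∩ V).Nonempty) ∧
    (∃ δ : ℝ, 0 < δ ∧ ∀ P : Phase 3, ∀ V : Set (Phase 3), IsOpenX V → P ∈ V →
        ∃ Q ∈ V, ∃ n : ℕ, 0 < n ∧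
          dX ((Gg (caesarCBC k))^[n] P) ((Gg (caesarCBC k))^[n] Q) > δ) :=
  have hg := caesarCBC_bijective_left k
  ⟨fun P _ hε => Gg_regular (fun x => (hg x).2) P hε,
    fun _ _ hU _ hUne hVne => Gg_transitive (fun x => (hg x).2) hU hUne hVne,
    Gg_sensitive fun x => (hg x).1⟩

/-- the CBC mode built on the Caesar shift cipher over 3-bit blocks with
shift k = 1 or k = 2 is chaotic according to Devaney: G_g is regular, topologically
transitive, and has sensitive dependence on initial conditions. -/
theorem caesar_cbc_chaotic (k : ℕ) (hk : k = 1 ∨ k = 2) :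
    (∀ (P : Phase 3) (ε : ℝ), 0 < ε →
        ∃ (Q : Phase 3) (n : ℕ), 1 ≤ n ∧ (Gg (caesarCBC k))^[n] Q = Q ∧ dX P Q < ε) ∧
    (∀ U V : Set (Phase 3), IsOpenX U → IsOpenX V → U.Nonempty → V.Nonempty →
        ∃ n : ℕ, 0 < n ∧ ((Gg (caesarCBC k))^[n] '' U ∩ V).Nonempty) ∧
    (∃ δ : ℝ, 0 < δ ∧ ∀ P : Phase 3, ∀ V : Set (Phase 3), IsOpenX V → P ∈ V →
        ∃ Q ∈ V, ∃ n : ℕ, 0 < n ∧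
          dX ((Gg (caesarCBC k))^[n] P) ((Gg (caesarCBC k))^[n] Q) > δ) :=
  caesar_cbc_chaotic_general k
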